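/- arXiv:1510.00403 — 2 statements merged into one kernel-verified Lean document; each statement's English description precedes it below -/
import Mathlib

section
/- Let P̂, Q̂ ∈ R³ and S̄_f > 0, and let Σ = √((1ᵀP̂)² + (1ᵀQ̂)²). Then the minimizer of ‖P − P̂‖² + ‖Q − Q̂‖² over P, Q ∈ R³ subject to (1ᵀP)² + (1ᵀQ)² ≤ S̄_f² is given by P* = P̂ − max{1 − S̄_f/Σ, 0}·(11ᵀP̂)/3 and Q* = Q̂ − max{1 − S̄_f/Σ, 0}·(11ᵀQ̂)/3 (when Σ > 0; if Σ ≤ S̄_f the minimizer is (P̂, Q̂)). -/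
/-!
The constraint only sees the phase sums `1ᵀP, 1ᵀQ`, and by Cauchy–Schwarz
`‖P - P̂‖² ≥ (1ᵀP - 1ᵀP̂)² / 3`, with equality when `P - P̂` is a constant vector. So the problem
reduces to projecting the point `(1ᵀP̂, 1ᵀQ̂)` of norm `Σ` onto the disc of radius `S̄_f`, which is
the radial scaling by `min (1, S̄_f / Σ)`: any point of the disc is at distance at least
`Σ - S̄_f` from it by the reverse triangle inequality, and the scaled point attains that distance.
-/

open Finset

lemma sqrt_sub_sqrt_sq_le_sub_sq_add_sub_sq (a b p q : ℝ) :
    (√(p ^ 2 + q ^ 2) - √(a ^ 2 + b ^ 2)) ^ 2 ≤ (a - p) ^ 2 + (b - q) ^ 2 := by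
  have h := abs_norm_sub_norm_le (⟨p, q⟩ : ℂ) ⟨a, b⟩
  rw [Complex.norm_eq_sqrt_sq_add_sq, Complex.norm_eq_sqrt_sq_add_sq] at h
  calc (√(p ^ 2 + q ^ 2) - √(a ^ 2 + b ^ 2)) ^ 2
      ≤ ‖(⟨p, q⟩ - ⟨a, b⟩ : ℂ)‖ ^ 2 := sq_le_sq' (abs_le.mp h).1 (abs_le.mp h).2
    _ = (a - p) ^ 2 + (b - q) ^ 2 := by
      rw [Complex.sq_norm, Complex.normSq_apply]
      simp only [Complex.sub_re, Complex.sub_im]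
      ring

lemma max_sqrt_sub_zero_sq_le {a b p q S : ℝ} (hS : 0 ≤ S) (hab : a ^ 2 + b ^ 2 ≤ S ^ 2) :
    max (√(p ^ 2 + q ^ 2) - S) 0 ^ 2 ≤ (a - p) ^ 2 + (b - q) ^ 2 := by
  have hs : √(a ^ 2 + b ^ 2) ≤ S := (Real.sqrt_le_left hS).mpr hab
  rcases le_total (√(p ^ 2 + q ^ 2) - S) 0 with h | h
  · rw [max_eq_right h, zero_pow two_ne_zero]; positivity
  · rw [max_eq_left h]
    exact (pow_le_pow_left₀ h (by linarith) 2).trans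
      (sqrt_sub_sqrt_sq_le_sub_sq_add_sub_sq a b p q)

lemma max_one_sub_div_zero_mul {S r : ℝ} (hr : 0 < r) :
    max (1 - S / r) 0 * r = max (r - S) 0 := by
  rw [max_mul_of_nonneg _ _ hr.le, sub_mul, div_mul_cancel₀ _ hr.ne', one_mul, zero_mul]

lemma one_sub_max_one_sub_div_zero_mul {S r : ℝ} (hr : 0 < r) :
    (1 - max (1 - S / r) 0) * r = min S r := by
  rw [sub_mul, one_mul, max_one_sub_div_zero_mul hr, ← min_sub_sub_left, sub_sub_cancel,
    sub_zero]

section Shrink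

variable {ι : Type*} [Fintype ι] {x y : ι → ℝ} {c : ℝ}

lemma sum_eq_one_sub_mul_sum_of_shrink [Nonempty ι]
    (hy : ∀ i, y i = x i - c * (∑ j, x j) / Fintype.card ι) :
    ∑ i, y i = (1 - c) * ∑ i, x i := by
  simp only [hy, sum_sub_distrib, sum_const, card_univ, nsmul_eq_mul]
  field_simp

lemma sum_sub_sq_eq_of_shrink (hy : ∀ i, y i = x i - c * (∑ j, x j) / Fintype.card ι) :
    ∑ i, (y i - x i) ^ 2 = (c * ∑ i, x i) ^ 2 / Fintype.card ι := by
  simp only [hy, sub_sub_cancel_left, neg_sq, sum_const, card_univ, nsmul_eq_mul]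
  rcases (Fintype.card ι).eq_zero_or_pos with h | h
  · simp [h]
  · field_simp

lemma sq_sum_sub_div_card_le (x y : ι → ℝ) :
    (∑ i, y i - ∑ i, x i) ^ 2 / Fintype.card ι ≤ ∑ i, (y i - x i) ^ 2 := by
  rw [← sum_sub_distrib]
  exact div_le_of_le_mul₀ (by positivity) (by positivity)
    (sq_sum_le_card_mul_sum_sq.trans_eq (by rw [card_univ, mul_comm]))

end Shrink

/-- Proposition 1: projection onto the feeder-capacity constraint set. -/
theorem substation_projection {Phat Qhat : Fin 3 → ℝ} {Sf : ℝ} (hSf : 0 < Sf)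
    (Sig : ℝ) (hSig : Sig = Real.sqrt ((∑ i, Phat i) ^ 2 + (∑ i, Qhat i) ^ 2))
    (hSigpos : 0 < Sig)
    (Pstar Qstar : Fin 3 → ℝ)
    (hP : ∀ i, Pstar i = Phat i - max (1 - Sf / Sig) 0 * (∑ j, Phat j) / 3)
    (hQ : ∀ i, Qstar i = Qhat i - max (1 - Sf / Sig) 0 * (∑ j, Qhat j) / 3) :
    ((∑ i, Pstar i) ^ 2 + (∑ i, Qstar i) ^ 2 ≤ Sf ^ 2) ∧
    (∀ P Q : Fin 3 → ℝ, (∑ i, P i) ^ 2 + (∑ i, Q i) ^ 2 ≤ Sf ^ 2 →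
      ∑ i, (Pstar i - Phat i) ^ 2 + ∑ i, (Qstar i - Qhat i) ^ 2 ≤
        ∑ i, (P i - Phat i) ^ 2 + ∑ i, (Q i - Qhat i) ^ 2) ∧
    (Sig ≤ Sf → Pstar = Phat ∧ Qstar = Qhat) := by
  set c := max (1 - Sf / Sig) 0
  set p := ∑ i, Phat i
  set q := ∑ i, Qhat i
  have hP' : ∀ i, Pstar i = Phat i - c * p / Fintype.card (Fin 3) := by simpa using hP
  have hQ' : ∀ i, Qstar i = Qhat i - c * q / Fintype.card (Fin 3) := by simpa using hQ
  have hSig_sq : Sig ^ 2 = p ^ 2 + q ^ 2 := by rw [hSig, Real.sq_sqrt (by positivity)]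
  refine ⟨?_, fun P Q hPQ => ?_, fun h => ?_⟩
  · rw [sum_eq_one_sub_mul_sum_of_shrink hP', sum_eq_one_sub_mul_sum_of_shrink hQ']
    calc ((1 - c) * p) ^ 2 + ((1 - c) * q) ^ 2 = (min Sf Sig) ^ 2 := by
          rw [← one_sub_max_one_sub_div_zero_mul hSigpos]
          linear_combination (1 - c) ^ 2 * hSig_sq.symm
      _ ≤ Sf ^ 2 := pow_le_pow_left₀ (le_min hSf.le hSigpos.le) (min_le_left _ _) 2
  · have hP_lb := sq_sum_sub_div_card_le Phat P
    have hQ_lb := sq_sum_sub_div_card_le Qhat Q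
    simp only [Fintype.card_fin, Nat.cast_ofNat] at hP_lb hQ_lb
    calc ∑ i, (Pstar i - Phat i) ^ 2 + ∑ i, (Qstar i - Qhat i) ^ 2
        = max (Sig - Sf) 0 ^ 2 / 3 := by
          rw [sum_sub_sq_eq_of_shrink hP', sum_sub_sq_eq_of_shrink hQ',
            ← max_one_sub_div_zero_mul hSigpos, Fintype.card_fin, Nat.cast_ofNat]
          linear_combination c ^ 2 / 3 * hSig_sq.symm
      _ ≤ ((∑ i, P i - p) ^ 2 + (∑ i, Q i - q) ^ 2) / 3 := by
          gcongr
          rw [hSig]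
          exact max_sqrt_sub_zero_sq_le hSf.le hPQ
      _ ≤ ∑ i, (P i - Phat i) ^ 2 + ∑ i, (Q i - Qhat i) ^ 2 := by linarith
  · have hc : c = 0 := max_eq_right (by rw [sub_nonpos, one_le_div hSigpos]; exact h)
    constructor <;> ext i <;> simp [hP, hQ, hc]
end

section
/- Let Σ = √((1ᵀP̂)² + (1ᵀQ̂)²) with Σ > S̄_f > 0, and define ν* = (Σ/S̄_f − 1)/3 > 0. Then the vectors P* = P̂ − (3ν*/(1+3ν*))·(11ᵀP̂)/3 and Q* = Q̂ − (3ν*/(1+3ν*))·(11ᵀQ̂)/3 satisfy the stationarity conditions P* − P̂ + ν*·11ᵀP* = 0 and Q* − Q̂ + ν*·11ᵀQ* = 0, together with (1ᵀP*)² + (1ᵀQ*)² = S̄_f². -/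
/-!
Subtracting the fraction `nν / (1 + nν)` of the mean from each phase divides the total by
`1 + nν`; hence `x - x̂ + ν 𝟙𝟙ᵀx = 0` holds identically in `ν`. With `1 + 3ν* = Σ / S̄_f` the
totals `(1ᵀP*, 1ᵀQ*)` are `(1ᵀP̂, 1ᵀQ̂)` rescaled to the circle of radius `S̄_f`.
-/

open Finset

section MeanShift

variable {ι : Type*} [Fintype ι] [Nonempty ι] {x xhat : ι → ℝ} {n ν : ℝ}

theorem sum_eq_div_of_forall_eq_sub_mean (hn : (Fintype.card ι : ℝ) = n) (hν : 1 + n * ν ≠ 0)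
    (hx : ∀ i, x i = xhat i - (n * ν / (1 + n * ν)) * (∑ j, xhat j) / n) :
    ∑ i, x i = (∑ i, xhat i) / (1 + n * ν) := by
  have hn0 : n ≠ 0 := hn ▸ by positivity
  simp only [hx, sum_sub_distrib, sum_const, card_univ, nsmul_eq_mul, hn]
  field_simp
  ring

theorem sub_add_mul_sum_eq_zero_of_forall_eq_sub_mean (hn : (Fintype.card ι : ℝ) = n)
    (hν : 1 + n * ν ≠ 0)
    (hx : ∀ i, x i = xhat i - (n * ν / (1 + n * ν)) * (∑ j, xhat j) / n) (i : ι) :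
    x i - xhat i + ν * ∑ j, x j = 0 := by
  have hn0 : n ≠ 0 := hn ▸ by positivity
  rw [sum_eq_div_of_forall_eq_sub_mean hn hν hx, hx i]
  field_simp
  ring

end MeanShift

theorem div_sq_add_div_sq_of_eq_sqrt {a b r Sig : ℝ} (hSig : Sig = Real.sqrt (a ^ 2 + b ^ 2))
    (hSig0 : Sig ≠ 0) :
    (a / (Sig / r)) ^ 2 + (b / (Sig / r)) ^ 2 = r ^ 2 := by
  have hSig2 : Sig ^ 2 = a ^ 2 + b ^ 2 := by rw [hSig]; exact Real.sq_sqrt (by positivity)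
  simp only [div_pow]
  rw [← add_div, ← hSig2]
  field_simp

/-- KKT conditions for the substation projection in the active-constraint
case. -/
theorem substation_projection_kkt {Phat Qhat : Fin 3 → ℝ} {Sf Sig : ℝ}
    (hSf : 0 < Sf)
    (hSig : Sig = Real.sqrt ((∑ i, Phat i) ^ 2 + (∑ i, Qhat i) ^ 2))
    (hact : Sf < Sig)
    (ν : ℝ) (hν : ν = (Sig / Sf - 1) / 3)
    (Pstar Qstar : Fin 3 → ℝ)
    (hP : ∀ i, Pstar i = Phat i - (3 * ν / (1 + 3 * ν)) * (∑ j, Phat j) / 3)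
    (hQ : ∀ i, Qstar i = Qhat i - (3 * ν / (1 + 3 * ν)) * (∑ j, Qhat j) / 3) :
    0 < ν ∧
    (∀ i, Pstar i - Phat i + ν * (∑ j, Pstar j) = 0) ∧
    (∀ i, Qstar i - Qhat i + ν * (∑ j, Qstar j) = 0) ∧
    (∑ i, Pstar i) ^ 2 + (∑ i, Qstar i) ^ 2 = Sf ^ 2 := by
  have hden : 1 + 3 * ν = Sig / Sf := by rw [hν]; ring
  have hν0 : 0 < ν := by
    have : 1 < Sig / Sf := (one_lt_div hSf).mpr hact
    linarith
  have hden0 : 1 + 3 * ν ≠ 0 := by positivity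
  have hcard : (Fintype.card (Fin 3) : ℝ) = 3 := by simp
  refine ⟨hν0, sub_add_mul_sum_eq_zero_of_forall_eq_sub_mean hcard hden0 hP,
    sub_add_mul_sum_eq_zero_of_forall_eq_sub_mean hcard hden0 hQ, ?_⟩
  rw [sum_eq_div_of_forall_eq_sub_mean hcard hden0 hP,
    sum_eq_div_of_forall_eq_sub_mean hcard hden0 hQ, hden]
  exact div_sq_add_div_sq_of_eq_sqrt hSig (by linarith)
end
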